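/- There are exactly three extensions of the powerset functor P to the category Rel: (1) the Barr (Egli–Milner) extension, A (F̂r) B iff B ⊆ r[A] and A ⊆ r°[B]; (2) the relational image extension, A (F̂r) B iff B = r[A]; and (3) the restricted relational image extension, A (F̂r) B iff (B = r[A] ≠ ∅) or A = B = ∅. -/

import Mathlib

/-!
Every relation `r` factors as the graph of `x ↦ {y | r x y}` followed by membership, so an
extension `E` is determined by its Kleisli law `δ` (`E.distLaw`), and `ext_comp`, `ext_fun` give
`δ` naturality, a unit law and a multiplication law. The classification turns on whether
`δ {univ}` over `Bool` contains the proper subset `{true}`. If it does, naturality along tagging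
and marking maps into `I × Option Y` shows that a family relates to every set lying in its union
and meeting each of its members: the Barr extension. If it does not, indicator maps give
`δ {S} = {S}` for nonempty `S`, and the multiplication law applied to `{𝒜}` gives
`δ 𝒜 = {⋃₀ 𝒜}` whenever `⋃₀ 𝒜` is nonempty; whether `δ {∅}` contains `∅` then separates the
relational image from its restricted version.
-/

open CategoryTheory

/-- The graph of a function, as a relation. -/
def graphRel {X Y : Type} (f : X → Y) : Rel X Y := fun x y => f x = y

/-- An extension of a `Set`-endofunctor `F` to the category of sets and relations:
an assignment on relations that preserves relational composition and agrees with `F`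
on (graphs of) functions. -/
structure RelExtension (F : Type ⥤ Type) where
  ext : ∀ {X Y : Type}, Rel X Y → Rel (F.obj X) (F.obj Y)
  ext_comp : ∀ {X Y Z : Type} (r : Rel X Y) (s : Rel Y Z),
    ext (fun x z => ∃ y, r x y ∧ s y z) = fun a c => ∃ b, ext r a b ∧ ext s b c
  ext_fun : ∀ {X Y : Type} (f : X → Y), ext (graphRel f) = graphRel (F.map (TypeCat.ofHom f))

/-- The covariant powerset functor on `Set`. -/
def PowFunctor : Type ⥤ Type where
  obj X := Set X
  map f := TypeCat.ofHom (Set.image f)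
  map_id := by intro X; ext A; simp
  map_comp := by intro X Y Z f g; ext A; simp [Set.image_image]

/-- The Barr (Egli–Milner) extension of the powerset functor. -/
def barrP {X Y : Type} (r : Rel X Y) : Rel (Set X) (Set Y) :=
  fun A B => B ⊆ {y | ∃ x ∈ A, r x y} ∧ A ⊆ {x | ∃ y ∈ B, r x y}

/-- The relational image extension of the powerset functor. -/
def imgP {X Y : Type} (r : Rel X Y) : Rel (Set X) (Set Y) :=
  fun A B => B = {y | ∃ x ∈ A, r x y}

/-- The restricted relational image extension of the powerset functor. -/
def rimgP {X Y : Type} (r : Rel X Y) : Rel (Set X) (Set Y) :=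
  fun A B => (B = {y | ∃ x ∈ A, r x y} ∧ B ≠ ∅) ∨ (A = ∅ ∧ B = ∅)

open Set

section Extensions

variable {X Y Z : Type}

theorem setOf_exists_comp (r : Rel X Y) (s : Rel Y Z) (A : Set X) :
    {z | ∃ x ∈ A, ∃ y, r x y ∧ s y z} = {z | ∃ y ∈ {y | ∃ x ∈ A, r x y}, s y z} := by
  ext z
  exact ⟨fun ⟨x, hx, y, hr, hs⟩ => ⟨y, ⟨x, hx, hr⟩, hs⟩,
    fun ⟨y, ⟨x, hx, hr⟩, hs⟩ => ⟨x, hx, y, hr, hs⟩⟩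

theorem setOf_exists_graphRel (f : X → Y) (A : Set X) :
    {y | ∃ x ∈ A, graphRel f x y} = f '' A :=
  rfl

theorem sUnion_image_setOf (r : Rel X Y) (A : Set X) :
    ⋃₀ ((fun x => {y | r x y}) '' A) = {y | ∃ x ∈ A, r x y} := by
  ext y
  simp

theorem rimgP_iff (r : Rel X Y) (A : Set X) (B : Set Y) :
    rimgP r A B ↔ imgP r A B ∧ (B = ∅ → A = ∅) := by
  unfold rimgP imgP
  constructor
  · rintro (⟨hB, hne⟩ | ⟨rfl, rfl⟩)
    · exact ⟨hB, fun h => absurd h hne⟩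
    · simp
  · rintro ⟨hB, hA⟩
    by_cases h : B = ∅
    · exact Or.inr ⟨hA h, h⟩
    · exact Or.inl ⟨hB, h⟩

def barrExt : RelExtension PowFunctor where
  ext := barrP
  ext_comp r s := by
    funext A C
    apply propext
    constructor
    · rintro ⟨hC, hA⟩
      refine ⟨{y | (∃ x ∈ A, r x y) ∧ ∃ z ∈ C, s y z}, ⟨fun y hy => hy.1, fun x hx => ?_⟩,
        fun z hz => ?_, fun y hy => hy.2⟩
      · obtain ⟨z, hz, y, hr, hs⟩ := hA hx
        exact ⟨y, ⟨⟨x, hx, hr⟩, z, hz, hs⟩, hr⟩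
      · obtain ⟨x, hx, y, hr, hs⟩ := hC hz
        exact ⟨y, ⟨⟨x, hx, hr⟩, z, hz, hs⟩, hs⟩
    · rintro ⟨B, ⟨hBr, hAr⟩, hCs, hBs⟩
      refine ⟨fun z hz => ?_, fun x hx => ?_⟩
      · obtain ⟨y, hy, hs⟩ := hCs hz
        obtain ⟨x, hx, hr⟩ := hBr hy
        exact ⟨x, hx, y, hr, hs⟩
      · obtain ⟨y, hy, hr⟩ := hAr hx
        obtain ⟨z, hz, hs⟩ := hBs hy
        exact ⟨z, hz, y, hr, hs⟩
  ext_fun f := by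
    funext A B
    apply propext
    show B ⊆ f '' A ∧ A ⊆ {x | ∃ y ∈ B, f x = y} ↔ f '' A = B
    constructor
    · rintro ⟨hB, hA⟩
      refine Subset.antisymm ?_ hB
      rintro _ ⟨x, hx, rfl⟩
      obtain ⟨y, hy, rfl⟩ := hA hx
      exact hy
    · rintro rfl
      exact ⟨Subset.rfl, fun x hx => ⟨f x, mem_image_of_mem f hx, rfl⟩⟩

def imgExt : RelExtension PowFunctor where
  ext := imgP
  ext_comp r s := by
    funext A C
    apply propext
    simp only [imgP, setOf_exists_comp]
    exact ⟨fun h => ⟨_, rfl, h⟩, fun ⟨B, hB, hC⟩ => hB ▸ hC⟩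
  ext_fun f := by
    funext A B
    exact propext (eq_comm.trans (by rw [setOf_exists_graphRel]; rfl))

def rimgExt : RelExtension PowFunctor where
  ext := rimgP
  ext_comp r s := by
    funext A C
    apply propext
    show rimgP _ A C ↔ ∃ B, rimgP r A B ∧ rimgP s B C
    simp only [rimgP_iff, imgP, setOf_exists_comp]
    constructor
    · rintro ⟨rfl, hA⟩
      refine ⟨_, ⟨rfl, fun hB => hA ?_⟩, rfl, fun hC => ?_⟩
      · simp [hB]
      · simp [hA hC]
    · rintro ⟨B, ⟨rfl, hA⟩, rfl, hB⟩
      exact ⟨rfl, fun hC => hA (hB hC)⟩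
  ext_fun f := by
    funext A B
    apply propext
    rw [rimgP_iff]
    show (B = {y | ∃ x ∈ A, graphRel f x y} ∧ (B = ∅ → A = ∅)) ↔ f '' A = B
    rw [setOf_exists_graphRel]
    constructor
    · exact fun h => h.1.symm
    · rintro rfl
      exact ⟨rfl, image_eq_empty.1⟩

end Extensions

namespace RelExtension

section Functor

variable {F : Type ⥤ Type} (E : RelExtension F)

theorem ext_precomp {X Y Z : Type} (f : X → Y) (s : Rel Y Z) (a : F.obj X) (c : F.obj Z) :
    E.ext (fun x z => s (f x) z) a c ↔ E.ext s (F.map (TypeCat.ofHom f) a) c := by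
  have h : (fun x z => s (f x) z) = fun x z => ∃ y, graphRel f x y ∧ s y z := by
    funext x z; simp [graphRel]
  rw [h, E.ext_comp, E.ext_fun]
  simp [graphRel]

theorem ext_postcomp {X Y Z : Type} (r : Rel X Y) (f : Y → Z) (a : F.obj X) (c : F.obj Z) :
    E.ext (fun x z => ∃ y, r x y ∧ f y = z) a c ↔
      ∃ b, E.ext r a b ∧ F.map (TypeCat.ofHom f) b = c := by
  have h := congrFun (congrFun (E.ext_comp r (graphRel f)) a) c
  rw [E.ext_fun] at h
  exact Iff.of_eq h

end Functor

section Powerset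

variable (E : RelExtension PowFunctor)

/-- `E.distLaw 𝒜 B` says `B ∈ δ 𝒜` for the Kleisli distributive law `δ : PP → PP` of `E`. -/
def distLaw {Y : Type} : Rel (Set (Set Y)) (Set Y) := E.ext fun S y => y ∈ S

variable {X Y Z : Type}

theorem ext_iff_distLaw (r : Rel X Y) (A : Set X) (B : Set Y) :
    E.ext r A B ↔ E.distLaw ((fun x => {y | r x y}) '' A) B :=
  E.ext_precomp (fun x => {y | r x y}) (fun S y => y ∈ S) A B

theorem distLaw_image_image_iff (f : Y → Z) (𝒜 : Set (Set Y)) (C : Set Z) :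
    E.distLaw (image f '' 𝒜) C ↔ ∃ B, E.distLaw 𝒜 B ∧ f '' B = C :=
  (E.ext_precomp (image f) (fun S z => z ∈ S) 𝒜 C).symm.trans
    (E.ext_postcomp (fun S y => y ∈ S) f 𝒜 C)

theorem distLaw_image_image {f : Y → Z} {𝒜 : Set (Set Y)} {B : Set Y} (h : E.distLaw 𝒜 B) :
    E.distLaw (image f '' 𝒜) (f '' B) :=
  (E.distLaw_image_image_iff f 𝒜 _).2 ⟨B, h, rfl⟩

theorem distLaw_image_singleton_iff (A B : Set Y) :
    E.distLaw ((fun y => {y}) '' A) B ↔ B = A := by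
  have h : (fun y z : Y => z ∈ ({y} : Set Y)) = graphRel id := by
    funext y z; simp [graphRel, eq_comm]
  refine (E.ext_precomp (fun y => ({y} : Set Y)) (fun S y => y ∈ S) A B).symm.trans ?_
  rw [h, E.ext_fun]
  exact (show id '' A = B ↔ B = A by rw [image_id, eq_comm])

theorem distLaw_image_sUnion_iff (𝔄 : Set (Set (Set Y))) (B : Set Y) :
    E.distLaw (sUnion '' 𝔄) B ↔ ∃ 𝒞, E.distLaw 𝔄 𝒞 ∧ E.distLaw 𝒞 B := by
  have h : (fun (𝒮 : Set (Set Y)) y => y ∈ ⋃₀ 𝒮) = fun 𝒮 y => ∃ S, S ∈ 𝒮 ∧ y ∈ S := by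
    funext 𝒮 y; simp
  refine (E.ext_precomp sUnion (fun S y => y ∈ S) 𝔄 B).symm.trans ?_
  rw [h, E.ext_comp]
  rfl

theorem distLaw_empty_iff (B : Set Y) : E.distLaw (∅ : Set (Set Y)) B ↔ B = ∅ := by
  simpa using E.distLaw_image_singleton_iff ∅ B

variable {E}

theorem subset_sUnion_of_distLaw {𝒜 : Set (Set Y)} {B : Set Y} (h : E.distLaw 𝒜 B) :
    B ⊆ ⋃₀ 𝒜 := by
  have h𝒜 : image ((↑) : ⋃₀ 𝒜 → Y) '' (preimage (↑) '' 𝒜) = 𝒜 := by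
    rw [image_image]
    refine (image_congr fun S hS => ?_).trans (image_id' 𝒜)
    rw [Subtype.image_preimage_coe, inter_eq_right]
    exact subset_sUnion_of_mem hS
  rw [← h𝒜, distLaw_image_image_iff] at h
  obtain ⟨B', -, rfl⟩ := h
  exact Subtype.coe_image_subset _ B'

theorem exists_distLaw_singleton {S : Set Y} (hS : S.Nonempty) : ∃ B, E.distLaw {S} B := by
  have h : image (fun _ : Y => ()) '' {S} = (fun u => {u}) '' univ := by
    simp [hS.image_const, eq_comm]
  obtain ⟨B, hB, -⟩ := (E.distLaw_image_image_iff _ _ _).1 <|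
    h ▸ (E.distLaw_image_singleton_iff univ univ).2 rfl
  exact ⟨B, hB⟩

/-- Lifting `𝒜` to the family of sets `{S} ×ˢ S` makes the members pairwise disjoint and lets
the projection to `Set Y` read off, by the unit law, which members a relatum meets. -/
theorem inter_nonempty_of_distLaw {𝒜 : Set (Set Y)} {B S : Set Y}
    (hne : ∀ S ∈ 𝒜, S.Nonempty) (h : E.distLaw 𝒜 B) (hS : S ∈ 𝒜) : (S ∩ B).Nonempty := by
  have hsnd : image Prod.snd '' ((fun S => {S} ×ˢ S) '' 𝒜) = 𝒜 := by
    rw [image_image]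
    exact (image_congr fun S _ => snd_image_prod (singleton_nonempty S) S).trans (image_id' 𝒜)
  have hfst : image Prod.fst '' ((fun S => {S} ×ˢ S) '' 𝒜) = (fun S => {S}) '' 𝒜 := by
    rw [image_image]
    exact image_congr fun S hS => fst_image_prod {S} (hne S hS)
  rw [← hsnd, distLaw_image_image_iff] at h
  obtain ⟨B', hB', rfl⟩ := h
  have hfstB' := (E.distLaw_image_singleton_iff _ _).1 (hfst ▸ E.distLaw_image_image hB')
  obtain ⟨⟨S', y⟩, hyB', rfl⟩ : S ∈ Prod.fst '' B' := hfstB' ▸ hS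
  obtain ⟨T, ⟨S'', -, rfl⟩, hT⟩ := subset_sUnion_of_distLaw hB' hyB'
  obtain ⟨rfl, hy⟩ := mem_prod.1 hT
  exact ⟨y, hy, _, hyB', rfl⟩

theorem distLaw_singleton_empty_iff_of_map (f : Y → Z) :
    E.distLaw ({∅} : Set (Set Y)) ∅ ↔ E.distLaw ({∅} : Set (Set Z)) ∅ := by
  have h : image f '' ({∅} : Set (Set Y)) = {∅} := by simp
  rw [← h, distLaw_image_image_iff]
  constructor
  · exact fun hY => ⟨∅, hY, image_empty f⟩
  · rintro ⟨B, hB, hfB⟩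
    rwa [image_eq_empty.1 hfB] at hB

/-- Tag `P i` by `i` and add a marker `none`: the marker's indicator sends every member to `univ`,
so `hγ` pulls back to a relatum made of markers only, which the unit law at the tags forces to
contain every marker, and `getD (t i)` turns the marker tagged `i` into `t i`. -/
theorem distLaw_range_of_mem (hγ : E.distLaw {(univ : Set Bool)} {true}) {I : Type}
    (P : I → Set Y) (t : I → Y) (ht : ∀ i, t i ∈ P i) : E.distLaw (range P) (range t) := by
  rcases isEmpty_or_nonempty I with hI | hI
  · simp only [range_eq_empty, distLaw_empty_iff]
  let M : I → Set (Option Y) := fun i => insert none (some '' P i)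
  let G : I → Set (I × Option Y) := fun i => Prod.mk i '' M i
  have hmark : image (fun z : I × Option Y => z.2.isNone) '' range G = {univ} := by
    rw [← range_comp, ← range_const (ι := I) (c := univ)]
    congr 1
    funext i
    refine eq_univ_of_forall fun b => ?_
    cases b
    · exact ⟨(i, some (t i)), ⟨_, mem_insert_of_mem _ (mem_image_of_mem _ (ht i)), rfl⟩, rfl⟩
    · exact ⟨(i, none), ⟨_, mem_insert _ _, rfl⟩, rfl⟩
  obtain ⟨B', hB', hB'mark⟩ := (E.distLaw_image_image_iff _ _ _).1 (hmark ▸ hγ)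
  have htag : image Prod.fst '' range G = (fun i => {i}) '' univ := by
    rw [← range_comp, image_univ]
    congr 1
    funext i
    simp only [Function.comp_apply, G, image_image]
    exact (insert_nonempty _ _).image_const i
  have hB'tag := (E.distLaw_image_singleton_iff _ _).1 (htag ▸ E.distLaw_image_image hB')
  let g : I × Option Y → Y := fun z => z.2.getD (t z.1)
  have hG : image g '' range G = range P := by
    rw [← range_comp]
    congr 1
    funext i
    simp [G, M, g, image_image, image_insert_eq, insert_eq_of_mem (ht i)]
  have hnone : ∀ z ∈ B', z.2 = none := fun z hz =>
    Option.isNone_iff_eq_none.1 (hB'mark.subset (mem_image_of_mem _ hz))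
  have hB'g : g '' B' = range t := by
    ext y
    constructor
    · rintro ⟨z, hz, rfl⟩
      exact ⟨z.1, by simp [g, hnone z hz]⟩
    · rintro ⟨i, rfl⟩
      obtain ⟨z, hz, rfl⟩ : i ∈ Prod.fst '' B' := hB'tag ▸ mem_univ i
      exact ⟨z, hz, by simp [g, hnone z hz]⟩
  exact hG ▸ hB'g ▸ E.distLaw_image_image hB'

theorem distLaw_image_union (hγ : E.distLaw {(univ : Set Bool)} {true}) {𝒜 : Set (Set Y)}
    {B : Set Y} (h : E.distLaw 𝒜 B) (T : Set Y) : E.distLaw ((· ∪ T) '' 𝒜) B := by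
  have hpairs : E.distLaw (range fun S : 𝒜 => ({S.1, T} : Set (Set Y))) 𝒜 := by
    simpa using distLaw_range_of_mem hγ (fun S : 𝒜 => {S.1, T}) (↑) fun S => mem_insert _ _
  have hunion : sUnion '' range (fun S : 𝒜 => ({S.1, T} : Set (Set Y))) = (· ∪ T) '' 𝒜 := by
    ext U
    simp
  exact hunion ▸ (E.distLaw_image_sUnion_iff _ _).2 ⟨𝒜, hpairs, h⟩

/-- A fresh point `none` added to every member makes all members nonempty without meeting the
relatum. -/
theorem inter_nonempty_of_distLaw_of_gamma (hγ : E.distLaw {(univ : Set Bool)} {true})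
    {𝒜 : Set (Set Y)} {B S : Set Y} (h : E.distLaw 𝒜 B) (hS : S ∈ 𝒜) : (S ∩ B).Nonempty := by
  have hmarked := distLaw_image_union hγ (E.distLaw_image_image (f := some) h) {none}
  obtain ⟨z, hzS, y, hyB, rfl⟩ := inter_nonempty_of_distLaw
    (by simp) hmarked (mem_image_of_mem _ (mem_image_of_mem _ hS))
  obtain ⟨y', hy'S, hy'⟩ : some y ∈ some '' S := by simpa using hzS
  exact ⟨y, Option.some_injective _ hy' ▸ hy'S, hyB⟩

theorem distLaw_iff_of_gamma (hγ : E.distLaw {(univ : Set Bool)} {true}) (𝒜 : Set (Set Y))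
    (B : Set Y) : E.distLaw 𝒜 B ↔ B ⊆ ⋃₀ 𝒜 ∧ ∀ S ∈ 𝒜, (S ∩ B).Nonempty := by
  refine ⟨fun h => ⟨subset_sUnion_of_distLaw h,
    fun S hS => inter_nonempty_of_distLaw_of_gamma hγ h hS⟩, fun ⟨hB, h𝒜⟩ => ?_⟩
  let I := {p : Set Y × Y // p.1 ∈ 𝒜 ∧ p.2 ∈ p.1 ∩ B}
  have hP : range (fun p : I => p.1.1) = 𝒜 := by
    ext S
    refine ⟨fun ⟨p, hp⟩ => hp ▸ p.2.1, fun hS => ?_⟩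
    obtain ⟨y, hy⟩ := h𝒜 S hS
    exact ⟨⟨(S, y), hS, hy⟩, rfl⟩
  have ht : range (fun p : I => p.1.2) = B := by
    ext y
    refine ⟨fun ⟨p, hp⟩ => hp ▸ p.2.2.2, fun hy => ?_⟩
    obtain ⟨S, hS, hyS⟩ := hB hy
    exact ⟨⟨(S, y), hS, hyS, hy⟩, rfl⟩
  have h := distLaw_range_of_mem hγ _ _ fun p : I => p.2.2.1
  rwa [hP, ht] at h

theorem eq_univ_of_distLaw_univ (hγ : ¬ E.distLaw {(univ : Set Bool)} {true}) {B : Set Y}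
    (h : E.distLaw {univ} B) : B = univ := by
  classical
  by_contra hB
  obtain ⟨y₀, hy₀⟩ := (ne_univ_iff_exists_notMem B).1 hB
  obtain ⟨y₁, -, hy₁⟩ := inter_nonempty_of_distLaw (by rintro S rfl; exact ⟨y₀, mem_univ _⟩) h
    (mem_singleton univ)
  let χ : Y → Bool := fun y => decide (y ∈ B)
  have hχ : χ '' univ = univ := eq_univ_of_forall fun b => by
    cases b
    · exact ⟨y₀, mem_univ _, by simp [χ, hy₀]⟩
    · exact ⟨y₁, mem_univ _, by simp [χ, hy₁]⟩
  have hχB : χ '' B = {true} := by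
    refine Subset.antisymm ?_ (singleton_subset_iff.2 ⟨y₁, hy₁, by simp [χ, hy₁]⟩)
    rintro _ ⟨y, hy, rfl⟩
    simp [χ, hy]
  apply hγ
  simpa [hχ, hχB] using E.distLaw_image_image (f := χ) h

theorem distLaw_singleton_iff (hγ : ¬ E.distLaw {(univ : Set Bool)} {true}) {S : Set Y}
    (hS : S.Nonempty) (B : Set Y) : E.distLaw {S} B ↔ B = S := by
  have hunique : ∀ B, E.distLaw {S} B → B = S := fun B h => by
    have hS : image ((↑) : S → Y) '' {univ} = {S} := by simp
    obtain ⟨B', hB', rfl⟩ := (E.distLaw_image_image_iff _ _ _).1 (hS ▸ h)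
    rw [eq_univ_of_distLaw_univ hγ hB', image_univ, Subtype.range_coe]
  refine ⟨hunique B, fun hBS => ?_⟩
  obtain ⟨B', hB'⟩ := exists_distLaw_singleton (E := E) hS
  rw [hBS]
  rwa [hunique B' hB'] at hB'

theorem distLaw_iff_eq_sUnion (hγ : ¬ E.distLaw {(univ : Set Bool)} {true})
    {𝒜 : Set (Set Y)} (h𝒜 : 𝒜.Nonempty) (hU : (⋃₀ 𝒜).Nonempty) (B : Set Y) :
    E.distLaw 𝒜 B ↔ B = ⋃₀ 𝒜 :=
  calc E.distLaw 𝒜 B ↔ ∃ 𝒞, E.distLaw {𝒜} 𝒞 ∧ E.distLaw 𝒞 B := by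
        simp only [distLaw_singleton_iff hγ h𝒜, exists_eq_left]
    _ ↔ E.distLaw (sUnion '' {𝒜}) B := (E.distLaw_image_sUnion_iff _ _).symm
    _ ↔ B = ⋃₀ 𝒜 := by rw [image_singleton, distLaw_singleton_iff hγ hU]

theorem distLaw_iff_of_not_gamma (hγ : ¬ E.distLaw {(univ : Set Bool)} {true})
    (𝒜 : Set (Set Y)) (B : Set Y) :
    E.distLaw 𝒜 B ↔ B = ⋃₀ 𝒜 ∧ (B = ∅ → 𝒜 = ∅ ∨ E.distLaw {(∅ : Set Y)} ∅) := by
  rcases eq_empty_or_nonempty (⋃₀ 𝒜) with hU | hU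
  · rcases subset_singleton_iff_eq.1 (sUnion_eq_empty.1 hU) with rfl | rfl
    · simp [distLaw_empty_iff]
    · refine ⟨fun h => ?_, fun ⟨hB, hε⟩ => ?_⟩
      · obtain rfl : B = ∅ := subset_empty_iff.1 (by simpa using subset_sUnion_of_distLaw h)
        exact ⟨hU.symm, fun _ => Or.inr h⟩
      · obtain rfl : B = ∅ := hB.trans hU
        simpa using hε rfl
  · have hB : B = ⋃₀ 𝒜 → B ≠ ∅ := fun h => h ▸ hU.ne_empty
    rw [distLaw_iff_eq_sUnion hγ hU.of_sUnion hU]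
    tauto

end Powerset

theorem eq_barrP_or_eq_imgP_or_eq_rimgP (E : RelExtension PowFunctor) :
    (∀ (X Y : Type) (r : Rel X Y), E.ext r = barrP r) ∨
    (∀ (X Y : Type) (r : Rel X Y), E.ext r = imgP r) ∨
    (∀ (X Y : Type) (r : Rel X Y), E.ext r = rimgP r) := by
  by_cases hγ : E.distLaw {(univ : Set Bool)} {true}
  · refine Or.inl fun X Y r =>
      funext fun (A : Set X) => funext fun (B : Set Y) => propext ?_
    rw [ext_iff_distLaw, distLaw_iff_of_gamma hγ, sUnion_image_setOf]
    simp [barrP, subset_def, Set.Nonempty, and_comm]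
  have hε {Y : Type} : E.distLaw {(∅ : Set Y)} ∅ ↔ E.distLaw {(∅ : Set Empty)} ∅ :=
    (distLaw_singleton_empty_iff_of_map Empty.elim).symm
  by_cases hε₀ : E.distLaw {(∅ : Set Empty)} ∅
  · refine Or.inr <| Or.inl fun X Y r =>
      funext fun (A : Set X) => funext fun (B : Set Y) => propext ?_
    rw [ext_iff_distLaw, distLaw_iff_of_not_gamma hγ, sUnion_image_setOf]
    simp [imgP, hε, hε₀]
  · refine Or.inr <| Or.inr fun X Y r =>
      funext fun (A : Set X) => funext fun (B : Set Y) => propext ?_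
    rw [ext_iff_distLaw, distLaw_iff_of_not_gamma hγ, sUnion_image_setOf, rimgP_iff]
    simp [imgP, hε, hε₀]

end RelExtension

/-- There are exactly three extensions of the powerset functor to `Rel`: the Barr
(Egli–Milner) extension, the relational image extension, and the restricted relational
image extension. -/
theorem stmt19 :
    (∃ E : RelExtension PowFunctor, ∀ (X Y : Type) (r : Rel X Y), E.ext r = barrP r) ∧
    (∃ E : RelExtension PowFunctor, ∀ (X Y : Type) (r : Rel X Y), E.ext r = imgP r) ∧
    (∃ E : RelExtension PowFunctor, ∀ (X Y : Type) (r : Rel X Y), E.ext r = rimgP r) ∧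
    (∃ (X Y : Type) (r : Rel X Y), barrP r ≠ imgP r) ∧
    (∃ (X Y : Type) (r : Rel X Y), barrP r ≠ rimgP r) ∧
    (∃ (X Y : Type) (r : Rel X Y), imgP r ≠ rimgP r) ∧
    (∀ E : RelExtension PowFunctor,
      (∀ (X Y : Type) (r : Rel X Y), E.ext r = barrP r) ∨
      (∀ (X Y : Type) (r : Rel X Y), E.ext r = imgP r) ∨
      (∀ (X Y : Type) (r : Rel X Y), E.ext r = rimgP r)) := by
  have hbarr : barrP (fun _ _ : Bool => True) {true} {true} := by simp [barrP]
  have himg : imgP (fun _ _ : Bool => False) univ ∅ := by simp [imgP]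
  have hnot_img : ¬ imgP (fun _ _ : Bool => True) {true} {true} := fun h => by
    simpa using (Set.ext_iff.1 h false).2 ⟨true, rfl, trivial⟩
  have hnot_rimg : ¬ rimgP (fun _ _ : Bool => True) {true} {true} := by
    simp [rimgP_iff, hnot_img]
  have hnot_rimg' : ¬ rimgP (fun _ _ : Bool => False) univ ∅ := fun h =>
    univ_nonempty.ne_empty (((rimgP_iff _ _ _).1 h).2 rfl)
  exact ⟨⟨barrExt, fun _ _ _ => rfl⟩, ⟨imgExt, fun _ _ _ => rfl⟩, ⟨rimgExt, fun _ _ _ => rfl⟩,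
    ⟨Bool, Bool, _, fun h => hnot_img (h ▸ hbarr)⟩, ⟨Bool, Bool, _, fun h => hnot_rimg (h ▸ hbarr)⟩,
    ⟨Bool, Bool, _, fun h => hnot_rimg' (h ▸ himg)⟩, RelExtension.eq_barrP_or_eq_imgP_or_eq_rimgP⟩
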